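/- Let 1 < p < ∞ with conjugate exponent p', v a weight sequence with (v_{n+1}/v_n) bounded, r, s nonzero reals, and L₁ := liminf_n v_{n+1}/v_n. If α ∈ ℂ satisfies |r - α| < L₁|s|, then the sequence (((α - r)/s)^n)_{n≥0} belongs to l_{p'}(1/v); hence α is an eigenvalue of the adjoint B*(r,s) acting on l_{p'}(1/v). -/

import Mathlib

/-!
With `z = (α - r) / s` we have `‖z‖ < L₁`. Choosing `‖z‖ < c < L₁`, eventually
`v (n+1) > c v n`, so `‖z‖ⁿ / v n` shrinks at least by the factor `‖z‖ / c < 1` at each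
step and the ratio test applies to its `q`-th power. The eigenvalue equation is just `s z = α - r`.
-/

open Filter

theorem eventually_mul_lt_of_lt_liminf_ratio {v : ℕ → ℝ} (hv : ∀ n, 0 < v n) {c : ℝ}
    (hc : c < liminf (fun n => v (n + 1) / v n) atTop) :
    ∀ᶠ n in atTop, c * v n < v (n + 1) := by
  have hbdd : IsBoundedUnder (· ≥ ·) atTop fun n => v (n + 1) / v n :=
    isBoundedUnder_of ⟨0, fun n => (div_pos (hv _) (hv _)).le⟩
  filter_upwards [eventually_lt_of_lt_liminf hc hbdd] with n hn
  exact (lt_div_iff₀ (hv n)).mp hn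

theorem summable_rpow_of_eventually_le_mul {a : ℕ → ℝ} (ha : ∀ n, 0 ≤ a n) {t q : ℝ}
    (ht₀ : 0 ≤ t) (ht₁ : t < 1) (hq : 0 < q) (h : ∀ᶠ n in atTop, a (n + 1) ≤ t * a n) :
    Summable fun n => a n ^ q := by
  refine summable_of_ratio_norm_eventually_le (Real.rpow_lt_one ht₀ ht₁ hq) ?_
  filter_upwards [h] with n hn
  rw [Real.norm_of_nonneg (Real.rpow_nonneg (ha _) q),
    Real.norm_of_nonneg (Real.rpow_nonneg (ha _) q), ← Real.mul_rpow ht₀ (ha n)]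
  exact Real.rpow_le_rpow (ha _) hn hq.le

theorem summable_rpow_pow_div_of_lt_liminf_ratio {v : ℕ → ℝ} (hv : ∀ n, 0 < v n)
    {ρ q : ℝ} (hρ : 0 ≤ ρ) (hq : 0 < q)
    (hρL : ρ < liminf (fun n => v (n + 1) / v n) atTop) :
    Summable fun n => (ρ ^ n / v n) ^ q := by
  obtain ⟨c, hρc, hcL⟩ := exists_between hρL
  have hc : 0 < c := hρ.trans_lt hρc
  refine summable_rpow_of_eventually_le_mul
    (fun n => div_nonneg (pow_nonneg hρ n) (hv n).le) (div_nonneg hρ hc.le)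
    ((div_lt_one hc).mpr hρc) hq ?_
  filter_upwards [eventually_mul_lt_of_lt_liminf_ratio hv hcL] with n hn
  have hcv : 0 < c * v n := mul_pos hc (hv n)
  calc ρ ^ (n + 1) / v (n + 1) ≤ ρ ^ (n + 1) / (c * v n) := by gcongr
    _ = ρ / c * (ρ ^ n / v n) := by rw [pow_succ]; field_simp

theorem mul_pow_add_mul_pow_succ_sub_div {K : Type*} [Field K] (r s α : K) (hs : s ≠ 0)
    (n : ℕ) :
    r * ((α - r) / s) ^ n + s * ((α - r) / s) ^ (n + 1) = α * ((α - r) / s) ^ n := by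
  rw [pow_succ, mul_left_comm, mul_div_cancel₀ _ hs]
  ring

theorem stmt8 (p q : ℝ) (hpq : p.HolderConjugate q)
    (v : ℕ → ℝ) (hv : ∀ n, 0 < v n)
    (r s : ℝ) (hs : s ≠ 0)
    (L₁ : ℝ) (hL₁ : L₁ = liminf (fun n => v (n + 1) / v n) atTop)
    (α : ℂ) (hα : ‖α - (r : ℂ)‖ < L₁ * |s|) :
    Summable (fun n => (‖((α - (r : ℂ)) / (s : ℂ)) ^ n‖ / v n) ^ q) ∧
      ∀ n : ℕ, (r : ℂ) * ((α - (r : ℂ)) / (s : ℂ)) ^ n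
          + (s : ℂ) * ((α - (r : ℂ)) / (s : ℂ)) ^ (n + 1)
        = α * ((α - (r : ℂ)) / (s : ℂ)) ^ n := by
  have hz : ‖(α - r) / (s : ℂ)‖ < L₁ := by
    rwa [norm_div, Complex.norm_real, Real.norm_eq_abs, div_lt_iff₀ (abs_pos.mpr hs)]
  refine ⟨?_, mul_pow_add_mul_pow_succ_sub_div _ _ α (Complex.ofReal_ne_zero.mpr hs)⟩
  simp_rw [norm_pow]
  exact summable_rpow_pow_div_of_lt_liminf_ratio hv (norm_nonneg _) hpq.symm.pos (hL₁ ▸ hz)
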